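/- arXiv:2605.10200 — 5 statements merged into one kernel-verified Lean document; each statement's English description precedes it below -/
import Mathlib

section
/- Let ε > 0, K a positive integer, y ∈ [K], and let v_1, …, v_K be vectors in a real inner product space. Let S be drawn from the subset randomizer P_y, and define ĝ = (2(e^ε + 1)/(e^ε − 1)) · Σ_{k ∈ [K]} (1{k ∈ S} − 1/(e^ε + 1)) · v_k. Then E[ĝ] = v_y. -/
/-!
Expanding `∏ i, (f i + g i) = ∑ S, (∏ i ∈ S, f i) * ∏ i ∈ Sᶜ, g i` shows that the subset
probabilities sum to `1` and that `1{k ∈ S}` has mean `p k`, the inclusion probability of `k`.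
By linearity the expectation of `ĝ` is `c • ∑ k, (p k - q) • v k` with `q = 1/(e^ε + 1)`;
only `k = y` survives, and `c * (1/2 - q) = 1`.
-/

open Finset

/-- The subset randomizer: each `i ∈ [K]` is included in the output set independently with
probability `1/2` if `i = y` and probability `1/(e^ε + 1)` otherwise. `subsetProb ε y S` is the
probability that the output is exactly `S`. -/
noncomputable def subsetProb (ε : ℝ) {K : ℕ} (y : Fin K) (S : Finset (Fin K)) : ℝ :=
  (∏ i ∈ S, if i = y then (1 : ℝ) / 2 else 1 / (Real.exp ε + 1)) *
    ∏ i ∈ Sᶜ, (1 - if i = y then (1 : ℝ) / 2 else 1 / (Real.exp ε + 1))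

section ProductBernoulli

variable {R : Type*} [CommRing R] {ι : Type*} [Fintype ι] [DecidableEq ι]

def productBernoulli (p : ι → R) (S : Finset ι) : R :=
  (∏ i ∈ S, p i) * ∏ i ∈ Sᶜ, (1 - p i)

theorem sum_productBernoulli (p : ι → R) : ∑ S, productBernoulli p S = 1 := by
  simp [productBernoulli, ← Fintype.prod_add]

theorem sum_productBernoulli_mul_indicator (p : ι → R) (k : ι) :
    ∑ S, productBernoulli p S * (if k ∈ S then 1 else 0) = p k := by
  -- Setting the factor `1 - p k` to `0` kills exactly the subsets not containing `k`.
  have termwise : ∀ S : Finset ι, productBernoulli p S * (if k ∈ S then 1 else 0) =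
      (∏ i ∈ S, p i) * ∏ i ∈ Sᶜ, Function.update (fun i => 1 - p i) k 0 i := by
    intro S
    by_cases hk : k ∈ S
    · rw [if_pos hk, mul_one, productBernoulli]
      congr 1
      refine prod_congr rfl fun i hi => ?_
      rw [Function.update_of_ne (by rintro rfl; exact mem_compl.1 hi hk)]
    · rw [if_neg hk, mul_zero, prod_eq_zero (mem_compl.2 hk) (Function.update_self ..), mul_zero]
  rw [sum_congr rfl fun S _ => termwise S, ← Fintype.prod_add,
    Fintype.prod_eq_single k fun i hi => by rw [Function.update_of_ne hi, add_sub_cancel],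
    Function.update_self, add_zero]

variable {M : Type*} [AddCommGroup M] [Module R M]

theorem sum_productBernoulli_smul_centeredIndicator (p : ι → R) (q : R) (v : ι → M) :
    ∑ S, productBernoulli p S • ∑ k, ((if k ∈ S then 1 else 0) - q) • v k =
      ∑ k, (p k - q) • v k := by
  simp_rw [smul_sum, smul_smul]
  rw [sum_comm]
  refine sum_congr rfl fun k _ => ?_
  simp_rw [← sum_smul, mul_sub, sum_sub_distrib, ← sum_mul,
    sum_productBernoulli_mul_indicator, sum_productBernoulli, one_mul]

end ProductBernoulli

theorem stmt_1_general {V : Type*} [NormedAddCommGroup V] [InnerProductSpace ℝ V]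
    (ε : ℝ) (hε : 0 < ε) (K : ℕ) (y : Fin K) (v : Fin K → V) :
    (∑ S : Finset (Fin K), subsetProb ε y S •
        ((2 * (Real.exp ε + 1) / (Real.exp ε - 1)) •
          ∑ k : Fin K, ((if k ∈ S then (1 : ℝ) else 0) - 1 / (Real.exp ε + 1)) • v k))
      = v y := by
  set e := Real.exp ε
  have he : 1 < e := Real.one_lt_exp_iff.2 hε
  have hsubset : subsetProb ε y = productBernoulli fun i => if i = y then 1 / 2 else 1 / (e + 1) :=
    rfl
  simp_rw [smul_comm _ (2 * (e + 1) / (e - 1)), ← smul_sum, hsubset,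
    sum_productBernoulli_smul_centeredIndicator]
  rw [sum_eq_single y (fun k _ hk => by rw [if_neg hk, sub_self, zero_smul])
    (fun h => absurd (mem_univ y) h), if_pos rfl, smul_smul]
  convert one_smul ℝ (v y)
  field_simp [(sub_pos.2 he).ne', (by linarith : e + 1 ≠ 0)]
  ring

theorem stmt_1 {V : Type*} [NormedAddCommGroup V] [InnerProductSpace ℝ V]
    (ε : ℝ) (hε : 0 < ε) (K : ℕ) (hK : 0 < K) (y : Fin K) (v : Fin K → V) :
    (∑ S : Finset (Fin K), subsetProb ε y S •
        ((2 * (Real.exp ε + 1) / (Real.exp ε - 1)) •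
          ∑ k : Fin K, ((if k ∈ S then (1 : ℝ) else 0) - 1 / (Real.exp ε + 1)) • v k))
      = v y :=
  stmt_1_general ε hε K y v
end

section
/- Let ε > 0, K a positive integer, y ∈ [K], and let v_1, …, v_K be vectors in a real inner product space. Let S be drawn from the subset randomizer P_y and ĝ = (2(e^ε + 1)/(e^ε − 1)) · Σ_{k ∈ [K]} (1{k ∈ S} − 1/(e^ε + 1)) · v_k. Then E[‖ĝ − v_y‖²] = (2(e^ε + 1)/(e^ε − 1))² · ( Σ_{k ≠ y} ‖v_k‖² · e^ε/(e^ε + 1)² + (1/4)‖v_y‖² ). -/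
/-!
Write `p i` for the inclusion probability of `i`, so that `S` has the product law
`∏_{i ∈ S} p i · ∏_{i ∉ S} (1 - p i)`. Since `p y - 1/(e^ε + 1) = (e^ε - 1)/(2(e^ε + 1))` is the
reciprocal of the scaling constant `c`, the error `ĝ - v_y` equals `c · ∑_k (1{k ∈ S} - p k) v_k`.
The centred indicators `1{k ∈ S} - p k` are independent with mean zero, hence uncorrelated with
variance `p k (1 - p k)`, so `E‖ĝ - v_y‖² = c² ∑_k p k (1 - p k) ‖v_k‖²`; and `p k (1 - p k)` is
`e^ε/(e^ε + 1)²` for `k ≠ y` and `1/4` for `k = y`.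
-/

open Finset

section ProductWeight

variable {ι : Type*} [Fintype ι]

lemma norm_sum_smul_sq {V : Type*} [NormedAddCommGroup V] [InnerProductSpace ℝ V]
    (x : ι → ℝ) (v : ι → V) :
    ‖∑ k, x k • v k‖ ^ 2 = ∑ k, ∑ l, inner ℝ (v k) (v l) * (x k * x l) := by
  rw [← real_inner_self_eq_norm_sq, sum_inner]
  refine sum_congr rfl fun k _ => ?_
  rw [inner_sum]
  refine sum_congr rfl fun l _ => ?_
  rw [real_inner_smul_left, real_inner_smul_right]
  ring

lemma sum_sub_smul_eq_sum_sub_smul_add_smul {M : Type*} [AddCommGroup M] [Module ℝ M]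
    (x p : ι → ℝ) (q : ℝ) (v : ι → M) (y : ι) (hp : ∀ k ≠ y, p k = q) :
    ∑ k, (x k - q) • v k = ∑ k, (x k - p k) • v k + (p y - q) • v y := by
  have hy : ∑ k, (p k - q) • v k = (p y - q) • v y :=
    Fintype.sum_eq_single y fun k hk => by rw [hp k hk, sub_self, zero_smul]
  rw [← hy, ← sum_add_distrib]
  exact sum_congr rfl fun k _ => by rw [← add_smul, sub_add_sub_cancel]

variable [DecidableEq ι]

def productWeight (p : ι → ℝ) (S : Finset ι) : ℝ :=
  (∏ i ∈ S, p i) * ∏ i ∈ Sᶜ, (1 - p i)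

lemma ite_mem_eq_prod_mul_prod_compl {R : Type*} [CommMonoid R] (S : Finset ι) (k : ι)
    (a b : R) :
    (if k ∈ S then a else b) =
      (∏ i ∈ S, if i = k then a else 1) * ∏ i ∈ Sᶜ, if i = k then b else 1 := by
  rw [prod_ite_eq', prod_ite_eq']
  by_cases hk : k ∈ S <;> simp [hk]

lemma sum_productWeight_mul_ite_mul_ite (p : ι → ℝ) (k l : ι) (a b c d : ℝ) :
    ∑ S, productWeight p S * ((if k ∈ S then a else b) * (if l ∈ S then c else d)) =
      ∏ i, (p i * ((if i = k then a else 1) * (if i = l then c else 1)) +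
        (1 - p i) * ((if i = k then b else 1) * (if i = l then d else 1))) := by
  rw [Fintype.prod_add]
  refine sum_congr rfl fun S _ => ?_
  rw [ite_mem_eq_prod_mul_prod_compl S k, ite_mem_eq_prod_mul_prod_compl S l, productWeight]
  simp only [prod_mul_distrib]
  ring

lemma sum_productWeight_mul_centered_mul_centered (p : ι → ℝ) (k l : ι) :
    ∑ S, productWeight p S *
        (((if k ∈ S then 1 else 0) - p k) * ((if l ∈ S then 1 else 0) - p l)) =
      if k = l then p k * (1 - p k) else 0 := by
  have hcentered : ∀ (S : Finset ι) (j : ι),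
      (if j ∈ S then (1 : ℝ) else 0) - p j = if j ∈ S then 1 - p j else -p j := by
    intro S j; split_ifs <;> ring
  simp only [hcentered, sum_productWeight_mul_ite_mul_ite]
  split_ifs with hkl
  · subst hkl
    rw [Fintype.prod_eq_single k fun i hi => by simp [hi]]
    simp only [if_true]
    ring
  · exact prod_eq_zero (mem_univ k) (by simp [hkl]; ring)

lemma sum_productWeight_mul_norm_sum_centered_smul_sq {V : Type*} [NormedAddCommGroup V]
    [InnerProductSpace ℝ V] (p : ι → ℝ) (v : ι → V) :
    ∑ S, productWeight p S * ‖∑ k, ((if k ∈ S then 1 else 0) - p k) • v k‖ ^ 2 =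
      ∑ k, p k * (1 - p k) * ‖v k‖ ^ 2 := by
  simp only [norm_sum_smul_sq, mul_sum]
  rw [sum_comm]
  refine sum_congr rfl fun k _ => ?_
  rw [sum_comm]
  simp_rw [mul_left_comm (productWeight p _) (inner ℝ _ _), ← mul_sum,
    sum_productWeight_mul_centered_mul_centered, mul_ite, mul_zero, sum_ite_eq,
    if_pos (mem_univ k), real_inner_self_eq_norm_sq]
  ring

end ProductWeight

noncomputable def inclusionProb (ε : ℝ) {K : ℕ} (y : Fin K) (i : Fin K) : ℝ :=
  if i = y then 1 / 2 else 1 / (Real.exp ε + 1)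

lemma subsetProb_eq_productWeight (ε : ℝ) {K : ℕ} (y : Fin K) :
    subsetProb ε y = productWeight (inclusionProb ε y) :=
  rfl

lemma inclusionProb_self (ε : ℝ) {K : ℕ} (y : Fin K) : inclusionProb ε y y = 1 / 2 :=
  if_pos rfl

lemma inclusionProb_mul_one_sub_of_ne (ε : ℝ) {K : ℕ} {y i : Fin K} (hi : i ≠ y) :
    inclusionProb ε y i * (1 - inclusionProb ε y i) = Real.exp ε / (Real.exp ε + 1) ^ 2 := by
  have : Real.exp ε + 1 ≠ 0 := by positivity
  simp only [inclusionProb, if_neg hi]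
  field_simp
  ring

lemma inclusionProb_self_mul_one_sub (ε : ℝ) {K : ℕ} (y : Fin K) :
    inclusionProb ε y y * (1 - inclusionProb ε y y) = 1 / 4 := by
  norm_num [inclusionProb_self]

theorem stmt_2_general {V : Type*} [NormedAddCommGroup V] [InnerProductSpace ℝ V]
    (ε : ℝ) (hε : 0 < ε) (K : ℕ) (y : Fin K) (v : Fin K → V) :
    (∑ S : Finset (Fin K), subsetProb ε y S *
        ‖((2 * (Real.exp ε + 1) / (Real.exp ε - 1)) •
            ∑ k : Fin K, ((if k ∈ S then (1 : ℝ) else 0) - 1 / (Real.exp ε + 1)) • v k)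
          - v y‖ ^ 2)
      = (2 * (Real.exp ε + 1) / (Real.exp ε - 1)) ^ 2 *
          ((∑ k ∈ Finset.univ.erase y,
              ‖v k‖ ^ 2 * (Real.exp ε / (Real.exp ε + 1) ^ 2)) +
            (1 / 4) * ‖v y‖ ^ 2) := by
  rw [subsetProb_eq_productWeight]
  set c := 2 * (Real.exp ε + 1) / (Real.exp ε - 1)
  set p := inclusionProb ε y
  have hc : c * (p y - 1 / (Real.exp ε + 1)) = 1 := by
    have : 1 < Real.exp ε := Real.one_lt_exp_iff.mpr hε
    simp only [c, p, inclusionProb_self]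
    field_simp [show Real.exp ε - 1 ≠ 0 by linarith]
    ring
  have hcentre : ∀ S : Finset (Fin K),
      c • ∑ k, ((if k ∈ S then (1 : ℝ) else 0) - 1 / (Real.exp ε + 1)) • v k - v y =
        c • ∑ k, ((if k ∈ S then (1 : ℝ) else 0) - p k) • v k := fun S => by
    rw [sum_sub_smul_eq_sum_sub_smul_add_smul _ p _ v y fun k hk => if_neg hk,
      smul_add, smul_smul, hc, one_smul, add_sub_cancel_right]
  calc _ = ∑ S, productWeight p S *
        (c ^ 2 * ‖∑ k, ((if k ∈ S then (1 : ℝ) else 0) - p k) • v k‖ ^ 2) := by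
        simp only [hcentre, norm_smul, mul_pow, Real.norm_eq_abs, sq_abs]
    _ = c ^ 2 * ∑ k, p k * (1 - p k) * ‖v k‖ ^ 2 := by
        simp only [mul_left_comm _ (c ^ 2), ← mul_sum,
          sum_productWeight_mul_norm_sum_centered_smul_sq]
    _ = _ := by
        rw [← add_sum_erase univ _ (mem_univ y), add_comm, inclusionProb_self_mul_one_sub]
        congr 2
        exact sum_congr rfl fun k hk => by
          rw [inclusionProb_mul_one_sub_of_ne ε (ne_of_mem_erase hk), mul_comm]

theorem stmt_2 {V : Type*} [NormedAddCommGroup V] [InnerProductSpace ℝ V]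
    (ε : ℝ) (hε : 0 < ε) (K : ℕ) (hK : 0 < K) (y : Fin K) (v : Fin K → V) :
    (∑ S : Finset (Fin K), subsetProb ε y S *
        ‖((2 * (Real.exp ε + 1) / (Real.exp ε - 1)) •
            ∑ k : Fin K, ((if k ∈ S then (1 : ℝ) else 0) - 1 / (Real.exp ε + 1)) • v k)
          - v y‖ ^ 2)
      = (2 * (Real.exp ε + 1) / (Real.exp ε - 1)) ^ 2 *
          ((∑ k ∈ Finset.univ.erase y,
              ‖v k‖ ^ 2 * (Real.exp ε / (Real.exp ε + 1) ^ 2)) +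
            (1 / 4) * ‖v y‖ ^ 2) :=
  stmt_2_general ε hε K y v
end

section
/- Let ε > 0, K a positive integer, y ∈ [K], L ≥ 0, and let v_1, …, v_K be vectors in a real inner product space with ‖v_k‖ ≤ L for all k. Let S be drawn from the subset randomizer P_y and ĝ = (2(e^ε + 1)/(e^ε − 1)) · Σ_{k ∈ [K]} (1{k ∈ S} − 1/(e^ε + 1)) · v_k. Then E[‖ĝ‖²] ≤ L² · (1 + 4e^ε(K + e^ε)/(e^ε − 1)²). -/
open Finset

open scoped RealInnerProductSpace

lemma sum_prod_compl {K : ℕ} (A B : Fin K → ℝ) :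
    ∑ S : Finset (Fin K), (∏ i ∈ S, A i) * (∏ i ∈ Sᶜ, B i) = ∏ i : Fin K, (A i + B i) := by
  rw [Finset.prod_add, ← Finset.powerset_univ]
  exact Finset.sum_congr rfl fun S _ => by rw [Finset.compl_eq_univ_sdiff]

lemma indicator_split {K : ℕ} (S : Finset (Fin K)) (j : Fin K) (q : ℝ) :
    (if j ∈ S then (1:ℝ) else 0) - q =
      (∏ i ∈ S, if i = j then 1 - q else 1) * (∏ i ∈ Sᶜ, if i = j then -q else 1) := by
  rw [Finset.prod_ite_eq' S j (fun _ => 1 - q), Finset.prod_ite_eq' Sᶜ j (fun _ => -q)]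
  by_cases h : j ∈ S <;> simp [h]

lemma cov_eq {K : ℕ} (p : Fin K → ℝ) (q : ℝ) (j k : Fin K) :
    ∑ S : Finset (Fin K), ((∏ i ∈ S, p i) * (∏ i ∈ Sᶜ, (1 - p i))) *
        (((if j ∈ S then (1:ℝ) else 0) - q) * ((if k ∈ S then (1:ℝ) else 0) - q)) =
      ∏ i : Fin K, (p i * (if i = j then 1 - q else 1) * (if i = k then 1 - q else 1) +
        (1 - p i) * (if i = j then -q else 1) * (if i = k then -q else 1)) := by
  rw [← sum_prod_compl]
  refine Finset.sum_congr rfl fun S _ => ?_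
  rw [indicator_split S j q, indicator_split S k q]
  simp only [Finset.prod_mul_distrib]
  ring

lemma cov_offdiag {K : ℕ} (p : Fin K → ℝ) (q : ℝ) (j k : Fin K) (hjk : j ≠ k)
    (hp : p j = q ∨ p k = q) :
    ∑ S : Finset (Fin K), ((∏ i ∈ S, p i) * (∏ i ∈ Sᶜ, (1 - p i))) *
        (((if j ∈ S then (1:ℝ) else 0) - q) * ((if k ∈ S then (1:ℝ) else 0) - q)) = 0 := by
  rw [cov_eq]
  rcases hp with hp | hp
  · exact Finset.prod_eq_zero (Finset.mem_univ j)
      (by simp [hjk, hp]; ring)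
  · exact Finset.prod_eq_zero (Finset.mem_univ k)
      (by simp [hjk.symm, Ne.symm hjk, hp]; ring)

lemma cov_diag {K : ℕ} (p : Fin K → ℝ) (q : ℝ) (j : Fin K) :
    ∑ S : Finset (Fin K), ((∏ i ∈ S, p i) * (∏ i ∈ Sᶜ, (1 - p i))) *
        (((if j ∈ S then (1:ℝ) else 0) - q) * ((if j ∈ S then (1:ℝ) else 0) - q)) =
      p j * (1 - q) ^ 2 + (1 - p j) * q ^ 2 := by
  rw [cov_eq]
  rw [Finset.prod_eq_single j (fun i _ hij => by simp [hij]) (fun h => absurd (Finset.mem_univ j) h)]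
  simp; ring

set_option maxHeartbeats 1600000 in
theorem stmt_3 {V : Type*} [NormedAddCommGroup V] [InnerProductSpace ℝ V]
    (ε : ℝ) (hε : 0 < ε) (K : ℕ) (hK : 0 < K) (y : Fin K) (L : ℝ) (hL : 0 ≤ L)
    (v : Fin K → V) (hv : ∀ k, ‖v k‖ ≤ L) :
    (∑ S : Finset (Fin K), subsetProb ε y S *
        ‖(2 * (Real.exp ε + 1) / (Real.exp ε - 1)) •
            ∑ k : Fin K, ((if k ∈ S then (1 : ℝ) else 0) - 1 / (Real.exp ε + 1)) • v k‖ ^ 2)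
      ≤ L ^ 2 * (1 + 4 * Real.exp ε * (K + Real.exp ε) / (Real.exp ε - 1) ^ 2) := by
  have he1 : 1 < Real.exp ε := by
    exact Real.one_lt_exp_iff.mpr hε
  set e := Real.exp ε with he
  have he0 : 0 < e - 1 := by linarith
  have he2 : 0 < e + 1 := by linarith
  set q : ℝ := 1 / (e + 1) with hq
  set c : ℝ := 2 * (e + 1) / (e - 1) with hc
  have hcpos : 0 ≤ c := by positivity
  set p : Fin K → ℝ := fun i => if i = y then (1:ℝ)/2 else q with hp
  -- rewrite subsetProb
  have hPS : ∀ S : Finset (Fin K), subsetProb ε y S = (∏ i ∈ S, p i) * (∏ i ∈ Sᶜ, (1 - p i)) := by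
    intro S; rfl
  set w : Fin K → Finset (Fin K) → ℝ := fun j S => (if j ∈ S then (1:ℝ) else 0) - q with hw
  -- Step 1: expand the squared norm
  have step1 : ∀ S : Finset (Fin K),
      subsetProb ε y S * ‖c • ∑ k : Fin K, w k S • v k‖ ^ 2 =
      ∑ j : Fin K, ∑ k : Fin K,
        c ^ 2 * (((∏ i ∈ S, p i) * (∏ i ∈ Sᶜ, (1 - p i))) * (w j S * w k S)) * ⟪v j, v k⟫ := by
    intro S
    have h1 : ‖c • ∑ k : Fin K, w k S • v k‖ ^ 2 =
        c ^ 2 * ⟪∑ j : Fin K, w j S • v j, ∑ k : Fin K, w k S • v k⟫ := by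
      rw [real_inner_self_eq_norm_sq, norm_smul, Real.norm_eq_abs, mul_pow, sq_abs]
    rw [h1, hPS]
    rw [sum_inner]
    rw [Finset.mul_sum, Finset.mul_sum]
    refine Finset.sum_congr rfl fun j _ => ?_
    rw [inner_sum, Finset.mul_sum, Finset.mul_sum]
    refine Finset.sum_congr rfl fun k _ => ?_
    rw [real_inner_smul_left, real_inner_smul_right]
    ring
  -- Step 2: sum over S, swap sums
  have step2 : (∑ S : Finset (Fin K), subsetProb ε y S * ‖c • ∑ k : Fin K, w k S • v k‖ ^ 2) =
      ∑ j : Fin K, ∑ k : Fin K, c ^ 2 *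
        (∑ S : Finset (Fin K), ((∏ i ∈ S, p i) * (∏ i ∈ Sᶜ, (1 - p i))) * (w j S * w k S)) *
        ⟪v j, v k⟫ := by
    rw [Finset.sum_congr rfl fun S _ => step1 S]
    rw [Finset.sum_comm]
    refine Finset.sum_congr rfl fun j _ => ?_
    rw [Finset.sum_comm]
    refine Finset.sum_congr rfl fun k _ => ?_
    rw [← Finset.sum_mul, ← Finset.mul_sum]
  -- Step 3: evaluate covariances
  have step3 : (∑ S : Finset (Fin K), subsetProb ε y S * ‖c • ∑ k : Fin K, w k S • v k‖ ^ 2) =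
      ∑ j : Fin K, c ^ 2 * (p j * (1 - q) ^ 2 + (1 - p j) * q ^ 2) * ‖v j‖ ^ 2 := by
    rw [step2]
    refine Finset.sum_congr rfl fun j _ => ?_
    rw [Finset.sum_eq_single j ?off (fun h => absurd (Finset.mem_univ j) h)]
    · have := cov_diag p q j
      simp only [hw]
      rw [this, real_inner_self_eq_norm_sq]
    · intro k _ hkj
      have hp' : p j = q ∨ p k = q := by
        by_cases hjy : j = y
        · right
          have : k ≠ y := by rw [hjy] at hkj; exact hkj
          simp [hp, this]
        · left; simp [hp, hjy]
      have := cov_offdiag p q j k (Ne.symm hkj) hp'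
      simp only [hw]
      rw [this]
      ring
  -- Final bound
  have hq0 : 0 < q := by positivity
  have hq1 : q < 1 := by
    rw [hq, div_lt_one he2]; linarith
  have step3' : (∑ S : Finset (Fin K), subsetProb ε y S *
      ‖c • ∑ k : Fin K, ((if k ∈ S then (1:ℝ) else 0) - q) • v k‖ ^ 2) =
      ∑ j : Fin K, c ^ 2 * (p j * (1 - q) ^ 2 + (1 - p j) * q ^ 2) * ‖v j‖ ^ 2 := step3
  rw [step3']
  -- bound each term by L^2
  have hbd : ∀ j : Fin K, c ^ 2 * (p j * (1 - q) ^ 2 + (1 - p j) * q ^ 2) * ‖v j‖ ^ 2 ≤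
      c ^ 2 * (p j * (1 - q) ^ 2 + (1 - p j) * q ^ 2) * L ^ 2 := by
    intro j
    have hpj0 : 0 ≤ p j := by
      simp only [hp]; split <;> [norm_num; positivity]
    have hpj1 : p j ≤ 1 := by
      simp only [hp]; split <;> [norm_num; linarith]
    have hD : 0 ≤ p j * (1 - q) ^ 2 + (1 - p j) * q ^ 2 := by
      have := sq_nonneg (1 - q); have := sq_nonneg q; nlinarith
    have hv2 : ‖v j‖ ^ 2 ≤ L ^ 2 := by
      have := norm_nonneg (v j)
      nlinarith [hv j]
    have : 0 ≤ c ^ 2 * (p j * (1 - q) ^ 2 + (1 - p j) * q ^ 2) := by positivity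
    exact mul_le_mul_of_nonneg_left hv2 this
  refine le_trans (Finset.sum_le_sum fun j _ => hbd j) ?_
  -- compute the sum
  have hsum : ∑ j : Fin K, c ^ 2 * (p j * (1 - q) ^ 2 + (1 - p j) * q ^ 2) * L ^ 2 =
      L ^ 2 * (c ^ 2 * ((K : ℝ) * (q * (1 - q) ^ 2 + (1 - q) * q ^ 2) +
        ((1/2) * (1 - q) ^ 2 + (1/2) * q ^ 2 - (q * (1 - q) ^ 2 + (1 - q) * q ^ 2)))) := by
    have hterm : ∀ j : Fin K, c ^ 2 * (p j * (1 - q) ^ 2 + (1 - p j) * q ^ 2) * L ^ 2 =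
        L ^ 2 * c ^ 2 * (q * (1 - q) ^ 2 + (1 - q) * q ^ 2) +
        (if j = y then L ^ 2 * c ^ 2 * ((1/2) * (1 - q) ^ 2 + (1/2) * q ^ 2
          - (q * (1 - q) ^ 2 + (1 - q) * q ^ 2)) else 0) := by
      intro j
      simp only [hp]
      by_cases h : j = y <;> simp [h] <;> ring
    rw [Finset.sum_congr rfl fun j _ => hterm j, Finset.sum_add_distrib, Finset.sum_const,
      Finset.sum_ite_eq' Finset.univ y, if_pos (Finset.mem_univ y), Finset.card_univ,
      Fintype.card_fin, nsmul_eq_mul]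
    ring
  rw [hsum]
  -- final scalar inequality
  have hK1 : (1:ℝ) ≤ (K:ℝ) := by exact_mod_cast hK
  have key : c ^ 2 * ((K : ℝ) * (q * (1 - q) ^ 2 + (1 - q) * q ^ 2) +
      ((1/2) * (1 - q) ^ 2 + (1/2) * q ^ 2 - (q * (1 - q) ^ 2 + (1 - q) * q ^ 2))) =
      2 + 4 * (K : ℝ) * e / (e - 1) ^ 2 := by
    rw [hc, hq]
    field_simp
    ring
  rw [key]
  have h4 : (1:ℝ) ≤ 4 * e ^ 2 / (e - 1) ^ 2 := by
    rw [le_div_iff₀ (by positivity)]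
    nlinarith
  have hdiff : 1 + 4 * e * ((K:ℝ) + e) / (e - 1) ^ 2 - (2 + 4 * (K:ℝ) * e / (e - 1) ^ 2) =
      4 * e ^ 2 / (e - 1) ^ 2 - 1 := by
    field_simp
    ring
  have hle : 2 + 4 * (K:ℝ) * e / (e - 1) ^ 2 ≤ 1 + 4 * e * ((K:ℝ) + e) / (e - 1) ^ 2 := by
    linarith
  nlinarith [sq_nonneg L]
end

section
/- Let ε > 0, let K ≥ 2 be an integer, let 1 ≤ d ≤ K − 1, and fix y ∈ [K]. Let S be a random d-element subset of [K] with Pr[S = A] = e^ε / D if y ∈ A and Pr[S = A] = 1 / D if y ∉ A, where D = e^ε·C(K−1, d−1) + C(K−1, d). Then this defines a probability distribution on d-element subsets, Pr[y ∈ S] = γ_d where γ_d = d e^ε/(d e^ε + K − d), and Pr[i ∈ S] = ζ_d := (d − γ_d)/(K − 1) for every i ≠ y. -/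
/-!
Among the `d`-subsets of `[K]`, `C(K-1, d-1)` contain `y` and `C(K-1, d)` avoid it, which gives
the total mass and `Pr[y ∈ S]`; the identity `C(K-1, d) d = C(K-1, d-1) (K-d)` turns the latter
into `γ_d`. For `i ≠ y`, double counting gives `∑ᵢ Pr[i ∈ S] = E|S| = d`, and the law of `S` is
invariant under the permutations fixing `y`, so all `Pr[i ∈ S]` with `i ≠ y` coincide:
`(K-1) ζ_d + γ_d = d`.
-/

open Finset

/-- The `d`-subset selection randomizer with privacy parameter `ε` and true label `y`:
a `d`-element subset `A ⊆ [K]` gets probability `e^ε / D` if `y ∈ A` and `1 / D` otherwise,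
where `D = e^ε · C(K-1, d-1) + C(K-1, d)`. -/
noncomputable def dSubsetProb (ε : ℝ) (K d : ℕ) (y : Fin K) (A : Finset (Fin K)) : ℝ :=
  if A.card = d then
    (if y ∈ A then Real.exp ε else 1) /
      (Real.exp ε * (K - 1).choose (d - 1) + (K - 1).choose d)
  else 0

/-- `γ_d = d e^ε / (d e^ε + K - d)`, the probability that the true label is in the output. -/
noncomputable def gammaD (ε : ℝ) (K d : ℕ) : ℝ :=
  d * Real.exp ε / (d * Real.exp ε + K - d)

/-- `ζ_d = (d - γ_d)/(K - 1)`, the probability that any fixed other label is in the output. -/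
noncomputable def zetaD (ε : ℝ) (K d : ℕ) : ℝ :=
  (d - gammaD ε K d) / (K - 1)

section InclusionMass

variable {α M : Type*} [Fintype α] [AddCommMonoid M]

theorem sum_card_smul_of_sized {p : Finset α → M} {d : ℕ} (hp : ∀ A, #A ≠ d → p A = 0) :
    ∑ A, #A • p A = d • ∑ A, p A := by
  rw [smul_sum]
  refine sum_congr rfl fun A _ => ?_
  by_cases hA : #A = d
  · rw [hA]
  · rw [hp A hA, smul_zero, smul_zero]

variable [DecidableEq α]

def inclusionMass (p : Finset α → M) (i : α) : M :=
  ∑ A, if i ∈ A then p A else 0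

theorem sum_inclusionMass (p : Finset α → M) :
    ∑ i, inclusionMass p i = ∑ A, #A • p A := by
  unfold inclusionMass
  rw [sum_comm]
  refine sum_congr rfl fun A _ => ?_
  rw [← sum_filter, sum_const, filter_mem_eq_inter, univ_inter]

theorem inclusionMass_eq_of_swap {p : Finset α → M} {i j : α}
    (hp : ∀ A, p (A.map (Equiv.swap i j).toEmbedding) = p A) :
    inclusionMass p i = inclusionMass p j := by
  unfold inclusionMass
  rw [← (Equiv.swap i j).finsetCongr.sum_comp]
  refine sum_congr rfl fun A _ => ?_
  simp [Equiv.finsetCongr_apply, hp, mem_map_equiv]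

theorem card_sub_one_smul_inclusionMass_add {p : Finset α → M} {y i : α}
    (hp : ∀ σ : Equiv.Perm α, σ y = y → ∀ A, p (A.map σ.toEmbedding) = p A) (hi : i ≠ y) :
    (Fintype.card α - 1) • inclusionMass p i + inclusionMass p y = ∑ A, #A • p A := by
  have hswap : ∀ j ∈ univ.erase y, inclusionMass p j = inclusionMass p i := fun j hj =>
    inclusionMass_eq_of_swap <| hp _ <|
      Equiv.swap_apply_of_ne_of_ne (ne_of_mem_erase hj).symm hi.symm
  rw [← sum_inclusionMass, ← add_sum_erase univ _ (mem_univ y), sum_congr rfl hswap, sum_const,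
    card_erase_of_mem (mem_univ y), card_univ, add_comm]

end InclusionMass

theorem sum_powersetCard_ite_mem {α M : Type*} [DecidableEq α] [AddCommMonoid M]
    {t : Finset α} {a : α} (ha : a ∈ t) {d : ℕ} (hd : 1 ≤ d) (x z : M) :
    ∑ A ∈ t.powersetCard d, (if a ∈ A then x else z)
      = (#t - 1).choose (d - 1) • x + (#t - 1).choose d • z := by
  have hmem : #{A ∈ t.powersetCard d | a ∈ A} = (#t - 1).choose (d - 1) := by
    simpa using card_filter_powersetCard_subset {a} t d (by simpa) (by simpa)
  have hnmem : {A ∈ t.powersetCard d | a ∉ A} = (t.erase a).powersetCard d := by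
    ext A
    simp only [mem_filter, mem_powersetCard, subset_erase]
    tauto
  rw [sum_ite, sum_const, sum_const, hmem, hnmem, card_powersetCard, card_erase_of_mem ha]

section dSubsetProb

variable (ε : ℝ) {K d : ℕ} (y : Fin K)

theorem dSubsetProb_nonneg (A : Finset (Fin K)) : 0 ≤ dSubsetProb ε K d y A := by
  unfold dSubsetProb
  split_ifs <;> positivity

theorem dSubsetProb_of_card_ne {A : Finset (Fin K)} (hA : #A ≠ d) : dSubsetProb ε K d y A = 0 :=
  if_neg hA

theorem dSubsetProb_map_perm (σ : Equiv.Perm (Fin K)) (hσ : σ y = y) (A : Finset (Fin K)) :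
    dSubsetProb ε K d y (A.map σ.toEmbedding) = dSubsetProb ε K d y A := by
  have hσ' : σ.symm y = y := σ.symm_apply_eq.mpr hσ.symm
  simp [dSubsetProb, mem_map_equiv, hσ']

theorem dSubsetProb_eq_ite_mem_powersetCard (A : Finset (Fin K)) :
    dSubsetProb ε K d y A = if A ∈ powersetCard d univ then
      (if y ∈ A then Real.exp ε else 1) /
        (Real.exp ε * (K - 1).choose (d - 1) + (K - 1).choose d)
    else 0 := by
  simp [dSubsetProb]

theorem dSubsetProb_denom_pos (hdK : d ≤ K) :
    0 < Real.exp ε * (K - 1).choose (d - 1) + (K - 1).choose d := by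
  have : 0 < (K - 1).choose (d - 1) := Nat.choose_pos (by omega)
  positivity

variable {ε y}

theorem sum_dSubsetProb (hd : 1 ≤ d) (hdK : d ≤ K) : ∑ A, dSubsetProb ε K d y A = 1 := by
  have hD := dSubsetProb_denom_pos ε hdK
  simp_rw [dSubsetProb_eq_ite_mem_powersetCard, sum_ite_mem, univ_inter, ite_div]
  rw [sum_powersetCard_ite_mem (mem_univ y) hd, card_univ, Fintype.card_fin, nsmul_eq_mul,
    nsmul_eq_mul, ← mul_div_assoc, ← mul_div_assoc, ← add_div,
    div_eq_one_iff_eq hD.ne']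
  ring

theorem inclusionMass_dSubsetProb_self (hd : 1 ≤ d) (hdK : d ≤ K) :
    inclusionMass (dSubsetProb ε K d y) y = gammaD ε K d := by
  have hD := dSubsetProb_denom_pos ε hdK
  have hpascal : ((K - 1).choose d : ℝ) * d = (K - 1).choose (d - 1) * (K - d) := by
    have h := Nat.choose_succ_right_eq (K - 1) (d - 1)
    rw [Nat.sub_add_cancel hd, Nat.sub_sub_sub_cancel_right hd] at h
    exact_mod_cast h
  have hgamma_denom : 0 < d * Real.exp ε + K - d := by
    have : 0 < (d : ℝ) * Real.exp ε := mul_pos (by exact_mod_cast hd) (Real.exp_pos ε)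
    have : (d : ℝ) ≤ K := by exact_mod_cast hdK
    linarith
  have hsummand : ∀ A, (if y ∈ A then dSubsetProb ε K d y A else 0) =
      if A ∈ powersetCard d univ then (if y ∈ A then Real.exp ε /
        (Real.exp ε * (K - 1).choose (d - 1) + (K - 1).choose d) else 0) else 0 := by
    intro A
    by_cases hy : y ∈ A <;> simp [dSubsetProb_eq_ite_mem_powersetCard, hy]
  unfold inclusionMass gammaD
  simp_rw [hsummand, sum_ite_mem, univ_inter]
  rw [sum_powersetCard_ite_mem (mem_univ y) hd, card_univ, Fintype.card_fin, smul_zero, add_zero,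
    nsmul_eq_mul, ← mul_div_assoc, div_eq_div_iff hD.ne' hgamma_denom.ne']
  linear_combination (-Real.exp ε) * hpascal

theorem inclusionMass_dSubsetProb_of_ne (hd : 1 ≤ d) (hdK : d ≤ K) {i : Fin K} (hi : i ≠ y) :
    inclusionMass (dSubsetProb ε K d y) i = zetaD ε K d := by
  have hK : 1 < K := Fintype.card_fin K ▸ Fintype.one_lt_card_iff.mpr ⟨i, y, hi⟩
  have key := card_sub_one_smul_inclusionMass_add (p := dSubsetProb ε K d y)
    (dSubsetProb_map_perm ε y) hi
  rw [sum_card_smul_of_sized fun A => dSubsetProb_of_card_ne ε y, sum_dSubsetProb hd hdK,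
    inclusionMass_dSubsetProb_self hd hdK, Fintype.card_fin, nsmul_eq_mul, nsmul_eq_mul,
    Nat.cast_sub (by omega), Nat.cast_one, mul_one] at key
  unfold zetaD
  rw [eq_div_iff (sub_ne_zero.mpr (by exact_mod_cast hK.ne'))]
  linarith

end dSubsetProb

theorem stmt_9_general (ε : ℝ) (K : ℕ) (d : ℕ)
    (hd1 : 1 ≤ d) (hd2 : d ≤ K - 1) (y : Fin K) :
    (∀ A : Finset (Fin K), 0 ≤ dSubsetProb ε K d y A) ∧
    (∀ A : Finset (Fin K), A.card ≠ d → dSubsetProb ε K d y A = 0) ∧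
    (∑ A : Finset (Fin K), dSubsetProb ε K d y A = 1) ∧
    (∑ A : Finset (Fin K), (if y ∈ A then dSubsetProb ε K d y A else 0))
      = gammaD ε K d ∧
    (∀ i : Fin K, i ≠ y →
      (∑ A : Finset (Fin K), (if i ∈ A then dSubsetProb ε K d y A else 0))
        = zetaD ε K d) := by
  have hdK : d ≤ K := hd2.trans (Nat.sub_le K 1)
  exact ⟨dSubsetProb_nonneg ε y, fun _ => dSubsetProb_of_card_ne ε y, sum_dSubsetProb hd1 hdK,
    inclusionMass_dSubsetProb_self hd1 hdK, fun _ => inclusionMass_dSubsetProb_of_ne hd1 hdK⟩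

theorem stmt_9 (ε : ℝ) (hε : 0 < ε) (K : ℕ) (hK : 2 ≤ K) (d : ℕ)
    (hd1 : 1 ≤ d) (hd2 : d ≤ K - 1) (y : Fin K) :
    (∀ A : Finset (Fin K), 0 ≤ dSubsetProb ε K d y A) ∧
    (∀ A : Finset (Fin K), A.card ≠ d → dSubsetProb ε K d y A = 0) ∧
    (∑ A : Finset (Fin K), dSubsetProb ε K d y A = 1) ∧
    (∑ A : Finset (Fin K), (if y ∈ A then dSubsetProb ε K d y A else 0))
      = gammaD ε K d ∧
    (∀ i : Fin K, i ≠ y →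
      (∑ A : Finset (Fin K), (if i ∈ A then dSubsetProb ε K d y A else 0))
        = zetaD ε K d) :=
  stmt_9_general ε K d hd1 hd2 y
end

section
/- There exists an absolute constant C > 0 such that the following holds. Let K ≥ 2 be an integer, let 0 < ε ≤ ln K, and set d = ⌈K/(2e^ε)⌉. Let y ∈ [K], L ≥ 0, and let v_1, …, v_K be vectors in a real inner product space with ‖v_k‖ ≤ L for all k. Let S be drawn from the d-subset selection distribution with true label y, and let ĝ = (1/(γ_d − ζ_d)) · Σ_{k ∈ [K]} (1{k ∈ S} − ζ_d) · v_k, where γ_d = d e^ε/(d e^ε + K − d) and ζ_d = (d − γ_d)/(K − 1). Then E[‖ĝ‖²] ≤ C · e^ε(e^ε + K) · L² / (e^ε − 1)². -/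
open Finset

universe u

/-! Conditionally on whether the true label `y` is selected, the selected set minus `y` is a
uniform `(d - 1)`- or `d`-subset `B` of the other `K - 1` labels. With `T = ∑_{k ≠ y} v k`, the
unnormalized estimator is `(1{y ∈ S} - ζ) v y + (∑_B v - (#B / (K - 1)) T) + (#B / (K - 1) - ζ) T`.
The outer terms have norm at most `L`, since `(K - 1) ζ = d - γ` lies within `1` of `#B`; the
middle one is a sampling-without-replacement deviation, of mean square at most `#B L²`.
Hence `E ‖X‖² ≤ (8 + 2 d) L²`, and `γ - ζ ≥ d (e^ε - 1) / (3 (K + e^ε))` together with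
`K ≤ 2 e^ε d` bounds `(8 + 2 d) L² / (γ - ζ)²` by `360 e^ε (e^ε + K) L² / (e^ε - 1)²`. -/

section Subsets

variable {ι : Type*} [DecidableEq ι]

lemma filter_notMem_powersetCard (s : Finset ι) (m : ℕ) (k : ι) :
    {B ∈ s.powersetCard m | k ∉ B} = (s.erase k).powersetCard m := by
  ext B
  simp only [mem_filter, mem_powersetCard, subset_erase]
  tauto

lemma card_filter_mem_powersetCard_succ {s : Finset ι} {k : ι} (hk : k ∈ s) (m : ℕ) :
    #{B ∈ s.powersetCard (m + 1) | k ∈ B} = (#s - 1).choose m := by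
  have h := card_filter_add_card_filter_not (s := s.powersetCard (m + 1)) (k ∈ ·)
  obtain ⟨n, hn⟩ : ∃ n, #s = n + 1 := Nat.exists_eq_succ_of_ne_zero (card_ne_zero_of_mem hk)
  rw [filter_notMem_powersetCard, card_powersetCard, card_powersetCard, card_erase_of_mem hk, hn,
    Nat.choose_succ_succ'] at h
  rw [Nat.add_sub_cancel] at h
  rw [hn, Nat.add_sub_cancel]
  omega

lemma sum_powersetCard_sum_comm {M : Type*} [AddCommMonoid M] (s : Finset ι) (m : ℕ)
    (f : Finset ι → ι → M) :
    ∑ B ∈ s.powersetCard m, ∑ k ∈ B, f B k = ∑ k ∈ s, ∑ B ∈ s.powersetCard m with k ∈ B, f B k :=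
  sum_comm' fun B k ↦ by
    simp only [mem_filter, mem_powersetCard]
    exact ⟨fun ⟨⟨hB, hc⟩, hk⟩ ↦ ⟨⟨⟨hB, hc⟩, hk⟩, hB hk⟩, fun ⟨h, _⟩ ↦ ⟨h.1, h.2⟩⟩

lemma sum_powersetCard_succ_sum {M : Type*} [AddCommMonoid M] (s : Finset ι) (m : ℕ)
    (w : ι → M) :
    ∑ B ∈ s.powersetCard (m + 1), ∑ k ∈ B, w k = (#s - 1).choose m • ∑ k ∈ s, w k := by
  rw [sum_powersetCard_sum_comm, smul_sum]
  exact sum_congr rfl fun k hk ↦ by rw [sum_const, card_filter_mem_powersetCard_succ hk]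

end Subsets

section Variance

variable {ι V : Type*} [NormedAddCommGroup V] [InnerProductSpace ℝ V]

lemma sum_norm_sub_average_sq_le (s : Finset ι) (v : ι → V) :
    ∑ k ∈ s, ‖v k - (#s : ℝ)⁻¹ • ∑ j ∈ s, v j‖ ^ 2 ≤ ∑ k ∈ s, ‖v k‖ ^ 2 := by
  set c := (#s : ℝ)⁻¹ • ∑ j ∈ s, v j
  have hc : ∑ j ∈ s, v j = (#s : ℝ) • c := by
    rcases s.eq_empty_or_nonempty with rfl | hs
    · simp
    · rw [smul_inv_smul₀ (by exact_mod_cast hs.card_pos.ne')]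
  have h : ∑ k ∈ s, ‖v k - c‖ ^ 2 = ∑ k ∈ s, ‖v k‖ ^ 2 - #s * ‖c‖ ^ 2 := by
    simp only [norm_sub_sq_real, sum_add_distrib, sum_sub_distrib, sum_const, nsmul_eq_mul]
    rw [← mul_sum, ← sum_inner, hc, real_inner_smul_left, real_inner_self_eq_norm_sq]
    ring
  rw [h]
  exact sub_le_self _ (mul_nonneg (Nat.cast_nonneg _) (sq_nonneg _))

lemma norm_div_card_sub_smul_sum_le {s : Finset ι} {v : ι → V} {L m ζ : ℝ}
    (hv : ∀ k ∈ s, ‖v k‖ ≤ L) (hL : 0 ≤ L) (hm : |m - #s * ζ| ≤ 1) :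
    ‖(m / #s - ζ) • ∑ k ∈ s, v k‖ ≤ L := by
  rcases s.eq_empty_or_nonempty with rfl | hs
  · simpa using hL
  have hs0 : (0 : ℝ) < #s := by exact_mod_cast hs.card_pos
  have hsum : ‖∑ k ∈ s, v k‖ ≤ #s * L := by
    refine (norm_sum_le_of_le _ hv).trans_eq ?_
    rw [sum_const, nsmul_eq_mul]
  rw [norm_smul, Real.norm_eq_abs, show m / #s - ζ = (m - #s * ζ) / #s by field_simp, abs_div,
    abs_of_pos hs0]
  calc |m - #s * ζ| / #s * ‖∑ k ∈ s, v k‖ ≤ 1 / #s * (#s * L) := by gcongr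
    _ = L := by field_simp

variable [DecidableEq ι]

lemma sum_powersetCard_norm_sum_sq_of_sum_eq_zero (s : Finset ι) (m : ℕ) {w : ι → V}
    (hw : ∑ k ∈ s, w k = 0) :
    ∑ B ∈ s.powersetCard (m + 1), ‖∑ k ∈ B, w k‖ ^ 2
      = (#s - 2).choose m * ∑ k ∈ s, ‖w k‖ ^ 2 := by
  have hcontain : ∀ j ∈ s,
      ∑ B ∈ s.powersetCard (m + 1) with j ∈ B, ∑ k ∈ B, w k = (#s - 2).choose m • w j := by
    intro j hj
    -- the subsets avoiding `j` are those of `s.erase j`, where `w` sums to `-w j`,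
    -- and all subsets together sum to `0`
    have hall := sum_filter_add_sum_filter_not (s.powersetCard (m + 1)) (j ∈ ·)
      (fun B ↦ ∑ k ∈ B, w k)
    have herase : ∑ k ∈ s.erase j, w k = -w j :=
      eq_neg_of_add_eq_zero_right ((add_sum_erase s w hj).trans hw)
    rw [filter_notMem_powersetCard, sum_powersetCard_succ_sum, sum_powersetCard_succ_sum, hw,
      smul_zero, herase, card_erase_of_mem hj, smul_neg, add_neg_eq_zero] at hall
    rw [hall, Nat.sub_sub]
  calc ∑ B ∈ s.powersetCard (m + 1), ‖∑ k ∈ B, w k‖ ^ 2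
      = ∑ B ∈ s.powersetCard (m + 1), ∑ j ∈ B, inner ℝ (w j) (∑ k ∈ B, w k) := by
        simp only [← real_inner_self_eq_norm_sq, sum_inner]
    _ = ∑ j ∈ s, inner ℝ (w j) (∑ B ∈ s.powersetCard (m + 1) with j ∈ B, ∑ k ∈ B, w k) := by
        simp only [inner_sum, sum_powersetCard_sum_comm]
    _ = (#s - 2).choose m * ∑ k ∈ s, ‖w k‖ ^ 2 := by
        rw [mul_sum]
        refine sum_congr rfl fun j hj ↦ ?_
        rw [hcontain j hj, inner_smul_right_eq_smul, real_inner_self_eq_norm_sq, nsmul_eq_mul]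

lemma sum_powersetCard_norm_sum_sub_sq_le (s : Finset ι) (m : ℕ) (v : ι → V) {L : ℝ}
    (hv : ∀ k ∈ s, ‖v k‖ ≤ L) :
    ∑ B ∈ s.powersetCard m, ‖∑ k ∈ B, v k - ((m : ℝ) / #s) • ∑ k ∈ s, v k‖ ^ 2
      ≤ (#s).choose m * m * L ^ 2 := by
  obtain _ | m := m
  · simp
  rcases s.eq_empty_or_nonempty with rfl | hs
  · rw [powersetCard_eq_empty.2 (by simp)]
    simp
  obtain ⟨n, hn⟩ : ∃ n, #s = n + 1 := Nat.exists_eq_succ_of_ne_zero hs.card_pos.ne'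
  set c := (#s : ℝ)⁻¹ • ∑ k ∈ s, v k
  have hs0 : (#s : ℝ) ≠ 0 := by rw [hn]; positivity
  have hw : ∑ k ∈ s, (v k - c) = 0 := by
    rw [sum_sub_distrib, sum_const, ← Nat.cast_smul_eq_nsmul ℝ, smul_inv_smul₀ hs0, sub_self]
  have hcentre : ∀ B ∈ s.powersetCard (m + 1),
      ∑ k ∈ B, v k - (((m + 1 : ℕ) : ℝ) / #s) • ∑ k ∈ s, v k = ∑ k ∈ B, (v k - c) := by
    intro B hBs
    rw [sum_sub_distrib, sum_const, (mem_powersetCard.1 hBs).2, div_eq_mul_inv, mul_smul,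
      Nat.cast_smul_eq_nsmul]
  have hnorm : ∑ k ∈ s, ‖v k - c‖ ^ 2 ≤ #s * L ^ 2 := by
    refine (sum_norm_sub_average_sq_le s v).trans ?_
    rw [← nsmul_eq_mul]
    exact sum_le_card_nsmul _ _ _ fun k hk ↦
      pow_le_pow_left₀ (norm_nonneg _) (hv k hk) 2
  calc ∑ B ∈ s.powersetCard (m + 1), ‖∑ k ∈ B, v k - (((m + 1 : ℕ) : ℝ) / #s) • ∑ k ∈ s, v k‖ ^ 2
      = (#s - 2).choose m * ∑ k ∈ s, ‖v k - c‖ ^ 2 := by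
        rw [sum_congr rfl fun B hB ↦ by rw [hcentre B hB],
          sum_powersetCard_norm_sum_sq_of_sum_eq_zero s m hw]
    _ ≤ (#s - 1).choose m * (#s * L ^ 2) := by
        refine mul_le_mul ?_ hnorm (sum_nonneg fun _ _ ↦ sq_nonneg _) (by positivity)
        exact_mod_cast Nat.choose_le_choose m (by omega)
    _ = (#s).choose (m + 1) * (m + 1 : ℕ) * L ^ 2 := by
        have h : ((n + 1 : ℕ) : ℝ) * n.choose m = (n + 1).choose (m + 1) * (m + 1 : ℕ) := by
          exact_mod_cast Nat.add_one_mul_choose_eq n m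
        rw [hn, Nat.add_sub_cancel]
        linear_combination L ^ 2 * h

end Variance

section Pointwise

variable {ι V : Type*} [Fintype ι] [DecidableEq ι] [NormedAddCommGroup V] [InnerProductSpace ℝ V]

lemma norm_sum_indicator_sub_smul_sq_le {ζ L : ℝ} (hζ0 : 0 ≤ ζ) (hζ1 : ζ ≤ 1) {v : ι → V}
    (hv : ∀ k, ‖v k‖ ≤ L) (y : ι) (A : Finset ι)
    (hA : |(#(A.erase y) : ℝ) - #(univ.erase y) * ζ| ≤ 1) :
    ‖∑ k, ((if k ∈ A then (1 : ℝ) else 0) - ζ) • v k‖ ^ 2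
      ≤ 8 * L ^ 2 + 2 * ‖∑ k ∈ A.erase y, v k
          - ((#(A.erase y) : ℝ) / #(univ.erase y)) • ∑ k ∈ univ.erase y, v k‖ ^ 2 := by
  set T := ∑ k ∈ univ.erase y, v k
  set n : ℝ := (#(univ.erase y) : ℝ)
  set m : ℝ := (#(A.erase y) : ℝ)
  set Y := ∑ k ∈ A.erase y, v k - (m / n) • T
  have hL : 0 ≤ L := (norm_nonneg _).trans (hv y)
  have hsplit : ∑ k, ((if k ∈ A then (1 : ℝ) else 0) - ζ) • v k
      = ((if y ∈ A then (1 : ℝ) else 0) - ζ) • v y + Y + (m / n - ζ) • T := by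
    rw [← add_sum_erase univ _ (mem_univ y)]
    simp only [sub_smul, ite_smul, one_smul, zero_smul, sum_sub_distrib, sum_ite_mem,
      erase_inter, univ_inter, ← smul_sum, Y, T]
    module
  have hy : ‖((if y ∈ A then (1 : ℝ) else 0) - ζ) • v y‖ ≤ L := by
    rw [norm_smul, Real.norm_eq_abs]
    refine (mul_le_mul ?_ (hv y) (norm_nonneg _) zero_le_one).trans_eq (one_mul L)
    split_ifs <;> rw [abs_le] <;> constructor <;> linarith
  have hT : ‖(m / n - ζ) • T‖ ≤ L := norm_div_card_sub_smul_sum_le (fun k _ ↦ hv k) hL hA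
  have hX : ‖∑ k, ((if k ∈ A then (1 : ℝ) else 0) - ζ) • v k‖ ≤ 2 * L + ‖Y‖ := by
    rw [hsplit]
    linarith [norm_add₃_le (a := ((if y ∈ A then (1 : ℝ) else 0) - ζ) • v y) (b := Y)
      (c := (m / n - ζ) • T)]
  nlinarith [pow_le_pow_left₀ (norm_nonneg _) hX 2, sq_nonneg (2 * L - ‖Y‖)]

end Pointwise

lemma sum_dSubsetProb_mul (ε : ℝ) {K d : ℕ} (hd : 1 ≤ d) (y : Fin K) (F : Finset (Fin K) → ℝ) :
    ∑ A, dSubsetProb ε K d y A * F A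
      = (Real.exp ε * ∑ B ∈ (univ.erase y).powersetCard (d - 1), F (insert y B)
          + ∑ B ∈ (univ.erase y).powersetCard d, F B)
        / (Real.exp ε * (K - 1).choose (d - 1) + (K - 1).choose d) := by
  obtain ⟨d, rfl⟩ := Nat.exists_eq_add_of_le' hd
  rw [Nat.add_sub_cancel]
  have hsupp : ∑ A, dSubsetProb ε K (d + 1) y A * F A
      = ∑ A ∈ powersetCard (d + 1) univ, dSubsetProb ε K (d + 1) y A * F A := by
    refine (sum_subset (subset_univ _) fun A _ hA ↦ ?_).symm
    rw [dSubsetProb, if_neg (mt mem_powersetCard_univ.2 hA), zero_mul]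
  have hsplit : powersetCard (d + 1) univ = powersetCard (d + 1) (univ.erase y)
      ∪ (powersetCard d (univ.erase y)).image (insert y) := by
    rw [← powersetCard_succ_insert (notMem_erase y univ), insert_erase (mem_univ y)]
  have hdisj : Disjoint (powersetCard (d + 1) (univ.erase y))
      ((powersetCard d (univ.erase y)).image (insert y)) := by
    refine disjoint_left.2 fun A hA hyA ↦ ?_
    obtain ⟨B, -, rfl⟩ := mem_image.1 hyA
    exact notMem_mono (mem_powersetCard.1 hA).1 (notMem_erase y univ) (mem_insert_self y B)
  have hinj : Set.InjOn (insert y) (powersetCard d (univ.erase y) : Set (Finset (Fin K))) :=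
    insert_erase_invOn.2.injOn.mono fun B hB ↦
      notMem_mono (mem_powersetCard.1 hB).1 (notMem_erase y univ)
  rw [hsupp, hsplit, sum_union hdisj, sum_image hinj, add_comm, add_div, mul_sum, sum_div,
    sum_div]
  congr 1
  · refine sum_congr rfl fun B hB ↦ ?_
    obtain ⟨hBs, hBc⟩ := mem_powersetCard.1 hB
    have hyB : y ∉ B := notMem_mono hBs (notMem_erase y univ)
    rw [dSubsetProb, if_pos (by rw [card_insert_of_notMem hyB, hBc]),
      if_pos (mem_insert_self y B), div_mul_eq_mul_div, Nat.add_sub_cancel]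
  · refine sum_congr rfl fun B hB ↦ ?_
    obtain ⟨hBs, hBc⟩ := mem_powersetCard.1 hB
    rw [dSubsetProb, if_pos hBc, if_neg (notMem_mono hBs (notMem_erase y univ)),
      div_mul_eq_mul_div, one_mul, Nat.add_sub_cancel]

section GammaZeta

variable {ε : ℝ} {K d : ℕ}

lemma gammaD_nonneg (hdK : d ≤ K) : 0 ≤ gammaD ε K d := by
  have : (d : ℝ) ≤ K := by exact_mod_cast hdK
  unfold gammaD
  apply div_nonneg <;> nlinarith [Real.exp_pos ε, d.cast_nonneg (α := ℝ)]

lemma gammaD_le_one (hdK : d ≤ K) : gammaD ε K d ≤ 1 := by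
  have : (d : ℝ) ≤ K := by exact_mod_cast hdK
  unfold gammaD
  apply div_le_one_of_le₀ <;> nlinarith [Real.exp_pos ε, d.cast_nonneg (α := ℝ)]

lemma sub_one_mul_zetaD (hK : K ≠ 1) : ((K : ℝ) - 1) * zetaD ε K d = d - gammaD ε K d := by
  rw [zetaD, mul_div_cancel₀]
  exact sub_ne_zero.2 (by exact_mod_cast hK)

lemma zetaD_nonneg (hd : 1 ≤ d) (hdK : d ≤ K) : 0 ≤ zetaD ε K d := by
  have : (d : ℝ) ≤ K := by exact_mod_cast hdK
  have : (1 : ℝ) ≤ d := by exact_mod_cast hd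
  have := gammaD_le_one (ε := ε) hdK
  exact div_nonneg (by linarith) (by linarith)

lemma zetaD_le_one (hdK : d < K) : zetaD ε K d ≤ 1 := by
  have : (d : ℝ) + 1 ≤ K := by exact_mod_cast hdK
  have := gammaD_nonneg (ε := ε) hdK.le
  exact div_le_one_of_le₀ (by linarith) (by linarith)

lemma gammaD_sub_zetaD (hK : K ≠ 1) (hd : 1 ≤ d) (hdK : d ≤ K) :
    gammaD ε K d - zetaD ε K d
      = d * (K - d) * (Real.exp ε - 1) / ((K - 1) * (d * Real.exp ε + K - d)) := by
  have : (1 : ℝ) ≤ d := by exact_mod_cast hd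
  have : (d : ℝ) ≤ K := by exact_mod_cast hdK
  have : (0 : ℝ) < d * Real.exp ε + K - d := by nlinarith [Real.exp_pos ε]
  have : (K : ℝ) - 1 ≠ 0 := sub_ne_zero.2 (by exact_mod_cast hK)
  rw [zetaD, gammaD]
  field_simp
  ring

lemma div_le_gammaD_sub_zetaD (hK : 2 ≤ K) (hd : 1 ≤ d) (he : 1 < Real.exp ε)
    (h2d : 2 * d ≤ K + 1) (hde : d * Real.exp ε ≤ K / 2 + Real.exp ε) :
    d * (Real.exp ε - 1) / (3 * (K + Real.exp ε)) ≤ gammaD ε K d - zetaD ε K d := by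
  have hKR : (2 : ℝ) ≤ K := by exact_mod_cast hK
  have hdR : (1 : ℝ) ≤ d := by exact_mod_cast hd
  have h2dR : 2 * (d : ℝ) ≤ K + 1 := by exact_mod_cast h2d
  rw [gammaD_sub_zetaD (by omega) hd (by omega), div_le_div_iff₀ (by positivity)
    (mul_pos (by linarith) (by nlinarith))]
  have hden : ((K : ℝ) - 1) * (d * Real.exp ε + K - d) ≤ 3 * (K - d) * (K + Real.exp ε) := by
    nlinarith
  have : 0 ≤ (d : ℝ) * (Real.exp ε - 1) := by nlinarith
  nlinarith [mul_le_mul_of_nonneg_left hden this]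

end GammaZeta

lemma natCeil_div_two_mul_bounds {K e : ℝ} (hK : 0 < K) (he : 1 < e) :
    1 ≤ ⌈K / (2 * e)⌉₊ ∧ K ≤ 2 * e * ⌈K / (2 * e)⌉₊ ∧ ⌈K / (2 * e)⌉₊ * e ≤ K / 2 + e ∧
      2 * (⌈K / (2 * e)⌉₊ : ℝ) < K + 2 := by
  have hx0 : 0 < K / (2 * e) := by positivity
  have hx : K / (2 * e) * (2 * e) = K := div_mul_cancel₀ K (by positivity)
  have hlo := Nat.le_ceil (K / (2 * e))
  have hhi := Nat.ceil_lt_add_one hx0.le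
  refine ⟨Nat.one_le_iff_ne_zero.2 (Nat.ceil_pos.2 hx0).ne', by nlinarith, by nlinarith,
    by nlinarith⟩

section SecondMoment

variable {V : Type*} [NormedAddCommGroup V] [InnerProductSpace ℝ V]

lemma sum_powersetCard_norm_sum_indicator_sub_smul_sq_le {ι : Type*} [Fintype ι] [DecidableEq ι]
    {ζ L : ℝ} (hζ0 : 0 ≤ ζ) (hζ1 : ζ ≤ 1) {v : ι → V} (hv : ∀ k, ‖v k‖ ≤ L) (y : ι) (m : ℕ)
    (hm : |(m : ℝ) - #(univ.erase y) * ζ| ≤ 1) (f : Finset ι → Finset ι)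
    (hf : ∀ B ∈ (univ.erase y).powersetCard m, (f B).erase y = B) :
    ∑ B ∈ (univ.erase y).powersetCard m, ‖∑ k, ((if k ∈ f B then (1 : ℝ) else 0) - ζ) • v k‖ ^ 2
      ≤ (#(univ.erase y)).choose m * ((8 + 2 * m) * L ^ 2) := by
  set s := univ.erase y
  calc ∑ B ∈ s.powersetCard m, ‖∑ k, ((if k ∈ f B then (1 : ℝ) else 0) - ζ) • v k‖ ^ 2
      ≤ ∑ B ∈ s.powersetCard m,
          (8 * L ^ 2 + 2 * ‖∑ k ∈ B, v k - ((m : ℝ) / #s) • ∑ k ∈ s, v k‖ ^ 2) := by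
        refine sum_le_sum fun B hB ↦ ?_
        have h := norm_sum_indicator_sub_smul_sq_le hζ0 hζ1 hv y (f B)
          (by rwa [hf B hB, (mem_powersetCard.1 hB).2])
        rwa [hf B hB, (mem_powersetCard.1 hB).2] at h
    _ ≤ (#s).choose m * ((8 + 2 * m) * L ^ 2) := by
        rw [sum_add_distrib, sum_const, card_powersetCard, nsmul_eq_mul, ← mul_sum]
        nlinarith [sum_powersetCard_norm_sum_sub_sq_le s m v fun k _ ↦ hv k]

variable {ε : ℝ} {K d : ℕ}

lemma sum_dSubsetProb_mul_norm_sq_le (hd : 1 ≤ d) (hdK : d < K) (y : Fin K)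
    {L : ℝ} {v : Fin K → V} (hv : ∀ k, ‖v k‖ ≤ L) :
    ∑ A, dSubsetProb ε K d y A *
        ‖∑ k, ((if k ∈ A then (1 : ℝ) else 0) - zetaD ε K d) • v k‖ ^ 2
      ≤ (8 + 2 * d) * L ^ 2 := by
  have hsN : #(univ.erase y) = K - 1 := by
    rw [card_erase_of_mem (mem_univ y), card_univ, Fintype.card_fin]
  have hs : ((#(univ.erase y) : ℕ) : ℝ) = K - 1 := by rw [hsN, Nat.cast_pred (by omega)]
  have hd1 : ((d - 1 : ℕ) : ℝ) = d - 1 := Nat.cast_pred hd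
  have hζ0 := zetaD_nonneg (ε := ε) hd hdK.le
  have hζ1 := zetaD_le_one (ε := ε) hdK
  have hγ0 := gammaD_nonneg (ε := ε) hdK.le
  have hγ1 := gammaD_le_one (ε := ε) hdK.le
  have hζ := sub_one_mul_zetaD (ε := ε) (K := K) (d := d) (by omega)
  have hyB : ∀ {m}, ∀ B ∈ (univ.erase y).powersetCard m, y ∉ B := fun B hB ↦
    notMem_mono (mem_powersetCard.1 hB).1 (notMem_erase y univ)
  have hin := sum_powersetCard_norm_sum_indicator_sub_smul_sq_le hζ0 hζ1 hv y (d - 1)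
    (by rw [hs, hζ, hd1, abs_le]; constructor <;> linarith) (insert y)
    fun B hB ↦ erase_insert (hyB B hB)
  have hout := sum_powersetCard_norm_sum_indicator_sub_smul_sq_le hζ0 hζ1 hv y d
    (by rw [hs, hζ, abs_le]; constructor <;> linarith) (fun B ↦ B)
    fun B hB ↦ erase_eq_of_notMem (hyB B hB)
  rw [hsN, hd1] at hin
  rw [hsN] at hout
  have hC : 0 < ((K - 1).choose (d - 1) : ℝ) := by
    exact_mod_cast Nat.choose_pos (by omega)
  have hin' : Real.exp ε * ((K - 1).choose (d - 1) * ((8 + 2 * (d - 1 : ℝ)) * L ^ 2))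
      ≤ Real.exp ε * ((K - 1).choose (d - 1) * ((8 + 2 * d) * L ^ 2)) := by
    gcongr
    linarith
  rw [sum_dSubsetProb_mul ε hd y, div_le_iff₀ (by positivity)]
  linarith [mul_le_mul_of_nonneg_left hin (Real.exp_pos ε).le]

end SecondMoment

lemma one_div_sq_mul_le_of_le {e K d g L : ℝ} (he : 1 < e) (hd : 1 ≤ d) (hK : 0 ≤ K)
    (hKd : K ≤ 2 * e * d) (hg : d * (e - 1) / (3 * (K + e)) ≤ g) :
    (1 / g) ^ 2 * ((8 + 2 * d) * L ^ 2) ≤ 360 * e * (e + K) * L ^ 2 / (e - 1) ^ 2 := by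
  have hq : 0 < d * (e - 1) / (3 * (K + e)) := by
    apply div_pos <;> nlinarith
  have hg' : (1 / g) ^ 2 ≤ (3 * (K + e) / (d * (e - 1))) ^ 2 := by
    rw [← one_div_div (d * (e - 1))]
    exact pow_le_pow_left₀ (one_div_pos.2 (hq.trans_le hg)).le (one_div_le_one_div_of_le hq hg) 2
  have he1 : 0 < e - 1 := by linarith
  calc (1 / g) ^ 2 * ((8 + 2 * d) * L ^ 2)
      ≤ (3 * (K + e) / (d * (e - 1))) ^ 2 * (10 * d * L ^ 2) := by
        gcongr
        · nlinarith
    _ = 90 * (K + e) * L ^ 2 / (e - 1) ^ 2 * ((K + e) / d) := by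
        field_simp
        ring
    _ ≤ 90 * (K + e) * L ^ 2 / (e - 1) ^ 2 * (4 * e) := by
        gcongr
        rw [div_le_iff₀ (by linarith)]
        nlinarith
    _ = 360 * e * (e + K) * L ^ 2 / (e - 1) ^ 2 := by ring

theorem stmt_17 : ∃ C : ℝ, 0 < C ∧
    ∀ (K : ℕ), 2 ≤ K → ∀ ε : ℝ, 0 < ε → ε ≤ Real.log K →
    ∀ d : ℕ, d = ⌈(K : ℝ) / (2 * Real.exp ε)⌉₊ →
    ∀ (V : Type u) [NormedAddCommGroup V] [InnerProductSpace ℝ V],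
    ∀ (y : Fin K) (L : ℝ), 0 ≤ L → ∀ v : Fin K → V, (∀ k, ‖v k‖ ≤ L) →
    (∑ A : Finset (Fin K), dSubsetProb ε K d y A *
        ‖(1 / (gammaD ε K d - zetaD ε K d)) •
            ∑ k : Fin K, ((if k ∈ A then (1 : ℝ) else 0) - zetaD ε K d) • v k‖ ^ 2)
      ≤ C * Real.exp ε * (Real.exp ε + K) * L ^ 2 / (Real.exp ε - 1) ^ 2 := by
  refine ⟨360, by norm_num, ?_⟩
  intro K hK ε hε _ d hd V _ _ y L _ v hv
  have he : 1 < Real.exp ε := Real.one_lt_exp_iff.2 hε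
  obtain ⟨hd1, hKd, hde, h2d⟩ := natCeil_div_two_mul_bounds (by positivity : (0 : ℝ) < K) he
  rw [← hd] at hd1 hKd hde h2d
  have h2dN : 2 * d ≤ K + 1 := by
    have : 2 * d < K + 2 := by exact_mod_cast h2d
    omega
  calc _ = (1 / (gammaD ε K d - zetaD ε K d)) ^ 2 * ∑ A, dSubsetProb ε K d y A *
          ‖∑ k, ((if k ∈ A then (1 : ℝ) else 0) - zetaD ε K d) • v k‖ ^ 2 := by
        simp only [norm_smul, mul_pow, Real.norm_eq_abs, sq_abs, mul_sum]
        exact sum_congr rfl fun A _ ↦ by ring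
    _ ≤ (1 / (gammaD ε K d - zetaD ε K d)) ^ 2 * ((8 + 2 * d) * L ^ 2) := by
        gcongr
        exact sum_dSubsetProb_mul_norm_sq_le hd1 (by omega) y hv
    _ ≤ 360 * Real.exp ε * (Real.exp ε + K) * L ^ 2 / (Real.exp ε - 1) ^ 2 :=
        one_div_sq_mul_le_of_le he (by exact_mod_cast hd1) (by positivity) hKd
          (div_le_gammaD_sub_zetaD hK hd1 he h2dN hde)
end
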